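/- arXiv:2505.17282 — 3 statements merged into one kernel-verified Lean document; each statement's English description precedes it below -/
import Mathlib

section
/- For any p◦ ≠ 0, the max-margin problem associated with p◦ (minimize ||p||_2 over p in the equivalence class P_{p◦} subject to p·(E_s − E_{s'}) ≥ 1 for all s ∈ S_X(P_{p◦}), all s' ∈ X \ S_X(P_{p◦}), and all sequences X in the dataset) is feasible and has a unique solution p̂. -/
open MeasureTheory ProbabilityTheory Filter Topology
open scoped BigOperators ENNReal NNReal Classical

noncomputable section

/-- `ℝ^d` with the Euclidean inner product. -/
abbrev Vec (d : ℕ) := EuclideanSpace ℝ (Fin d)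

variable {S : Type*}

/-- The Euclidean (real) inner product on `ℝ^d`. -/
def iprod {d : ℕ} (x y : Vec d) : ℝ := inner ℝ x y

/-- Output of the one-layer softmax attention model
`f(X; p, E) = (Σ_i exp(p·E_{x_i}) E_{x_i}·v) / (Σ_j exp(p·E_{x_j}))`. -/
def fAttn {d T : ℕ} (Emb : S → Vec d) (v p : Vec d) (X : Fin T → S) : ℝ :=
  (∑ i, Real.exp ((iprod (p) (Emb (X i)))) * (iprod (Emb (X i)) (v))) /
    ∑ j, Real.exp ((iprod (p) (Emb (X j))))

/-- Empirical logistic loss `L(E, p)`. -/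
def lossL {d T n : ℕ} (X : Fin n → Fin T → S) (y : Fin n → ℝ)
    (Emb : S → Vec d) (v p : Vec d) : ℝ :=
  (1 / n : ℝ) * ∑ k, Real.log (1 + Real.exp (- y k * fAttn Emb v p (X k)))

/-- Average signed frequency `α_s` of a token `s`. -/
def alphaFreq {T n : ℕ} (X : Fin n → Fin T → S) (y : Fin n → ℝ) (s : S) : ℝ :=
  (1 / (n * T) : ℝ) * ∑ k, y k * ∑ i, (if X k i = s then (1 : ℝ) else 0)

/-- Softmax weight `q_i(X)`. -/
def qw {d T : ℕ} (Emb : S → Vec d) (p : Vec d) (X : Fin T → S) (i : Fin T) : ℝ :=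
  Real.exp ((iprod (p) (Emb (X i)))) / ∑ j, Real.exp ((iprod (p) (Emb (X j))))

/-- `g(X, y) = 1 / (1 + exp(y f(X; p, E)))`. -/
def gfun {d T : ℕ} (Emb : S → Vec d) (v p : Vec d) (X : Fin T → S) (yv : ℝ) : ℝ :=
  1 / (1 + Real.exp (yv * fAttn Emb v p X))

/-- Partial gradient `∇_{E_s} L(E, p)` of the loss with respect to the embedding of token `s`. -/
def gradE {d T n : ℕ} (X : Fin n → Fin T → S) (y : Fin n → ℝ)
    (Emb : S → Vec d) (v p : Vec d) (s : S) : Vec d :=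
  gradient (fun u => lossL X y (Function.update Emb s u) v p) (Emb s)

/-- Gradient `∇_p L(E, p)` of the loss with respect to the ⟨cls⟩ embedding `p`. -/
def gradP {d T n : ℕ} (X : Fin n → Fin T → S) (y : Fin n → ℝ)
    (Emb : S → Vec d) (v p : Vec d) : Vec d :=
  gradient (fun u => lossL X y Emb v u) p

/-- The Gaussian `N(0, (1/d) I_d)` on `ℝ^d`. -/
def stdGaussianVec (d : ℕ) : Measure (Vec d) :=
  (Measure.pi fun _ : Fin d => gaussianReal 0 (1 / d : ℝ≥0)).map
    (MeasurableEquiv.toLp 2 (Fin d → ℝ))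

/-- i.i.d. `N(0, (1/d) I_d)` initialization of all the token embeddings `E_s^0` (`s ∈ S`)
and of the ⟨cls⟩ embedding `p^0`. -/
def initMeasure (d : ℕ) (S : Type*) [Fintype S] : Measure ((S ⊕ Unit) → Vec d) :=
  Measure.pi fun _ => stdGaussianVec d

/-- Initial token embeddings `E^0`. -/
def E0 {d : ℕ} (ω : (S ⊕ Unit) → Vec d) (s : S) : Vec d := ω (Sum.inl s)

/-- Initial ⟨cls⟩ embedding `p^0`. -/
def pInit {d : ℕ} (ω : (S ⊕ Unit) → Vec d) : Vec d := ω (Sum.inr ())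

/-- Token embeddings `E^1` after one gradient-descent step with step size `η0`. -/
def E1 {d T n : ℕ} (X : Fin n → Fin T → S) (y : Fin n → ℝ) (v : Vec d) (η0 : ℝ)
    (ω : (S ⊕ Unit) → Vec d) (s : S) : Vec d :=
  E0 ω s - η0 • gradE X y (E0 ω) v (pInit ω) s

/-- The ⟨cls⟩ embedding `p^1` after one gradient-descent step with step size `η0`. -/
def p1 {d T n : ℕ} (X : Fin n → Fin T → S) (y : Fin n → ℝ) (v : Vec d) (η0 : ℝ)
    (ω : (S ⊕ Unit) → Vec d) : Vec d :=
  pInit ω - η0 • gradP X y (E0 ω) v (pInit ω)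

/-- Selected-token set `S_X(p) = {s ∈ X : p·E_s = max_{s' ∈ X} p·E_{s'}}`. -/
def selSet {d T : ℕ} (Emb : S → Vec d) (p : Vec d) (X : Fin T → S) : Set S :=
  {s | s ∈ Set.range X ∧ ∀ i, (iprod (p) (Emb (X i))) ≤ (iprod (p) (Emb s))}

/-- Secondary selection set `S²_X(p)`. -/
def sel2Set {d T : ℕ} (Emb : S → Vec d) (p : Vec d) (X : Fin T → S) : Set S :=
  {s | s ∈ Set.range X ∧ s ∉ selSet Emb p X ∧
    ∀ s' ∈ Set.range X, s' ∉ selSet Emb p X → (iprod (p) (Emb s')) ≤ (iprod (p) (Emb s))}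

/-- Tokens of `X` selected neither in first nor in second place: `S^<_X(p)`. -/
def selLtSet {d T : ℕ} (Emb : S → Vec d) (p : Vec d) (X : Fin T → S) : Set S :=
  Set.range X \ (selSet Emb p X ∪ sel2Set Emb p X)

/-- Feasibility for the max-margin problem associated with `p₀`: `p` lies in the equivalence
class of `p₀` (same selection in every sequence) and separates, with margin 1, the selected
tokens from the non-selected tokens of every sequence. -/
def MMFeasible {d T n : ℕ} (Emb : S → Vec d) (X : Fin n → Fin T → S) (p₀ p : Vec d) : Prop :=
  (∀ k, selSet Emb p (X k) = selSet Emb p₀ (X k)) ∧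
  ∀ k, ∀ s ∈ selSet Emb p₀ (X k), ∀ s' ∈ Set.range (X k),
    s' ∉ selSet Emb p₀ (X k) → 1 ≤ (iprod (p) (Emb s - Emb s'))

/-- `phat` solves the max-margin problem associated with `p₀`. -/
def MaxMarginSol {d T n : ℕ} (Emb : S → Vec d) (X : Fin n → Fin T → S)
    (p₀ phat : Vec d) : Prop :=
  MMFeasible Emb X p₀ phat ∧ ∀ q : Vec d, MMFeasible Emb X p₀ q → ‖phat‖ ≤ ‖q‖

/-- A token is completely positive if it appears in the dataset and only in sequences with
label `+1`. -/
def ComplPos {T n : ℕ} (X : Fin n → Fin T → S) (y : Fin n → ℝ) (s : S) : Prop :=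
  (∃ k i, X k i = s) ∧ ∀ k, (∃ i, X k i = s) → y k = 1

/-- A token is completely negative if it appears in the dataset and only in sequences with
label `-1`. -/
def ComplNeg {T n : ℕ} (X : Fin n → Fin T → S) (y : Fin n → ℝ) (s : S) : Prop :=
  (∃ k i, X k i = s) ∧ ∀ k, (∃ i, X k i = s) → y k = -1

/-- Assumption A: every sequence `X_k` contains a single completely positive token or a single
completely negative token, denoted `sstar k`, and all its remaining tokens are irrelevant. -/
def AssumptionA {T n : ℕ} (X : Fin n → Fin T → S) (y : Fin n → ℝ) (sstar : Fin n → S) : Prop :=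
  ∀ k, (ComplPos X y (sstar k) ∨ ComplNeg X y (sstar k)) ∧
    (∃! i, X k i = sstar k) ∧
    ∀ i, X k i ≠ sstar k → alphaFreq X y (X k i) = 0

/-- `ptraj` is a gradient-flow trajectory for `p ↦ L(Emb, p)`. -/
def GradFlow {d T n : ℕ} (X : Fin n → Fin T → S) (y : Fin n → ℝ)
    (Emb : S → Vec d) (v : Vec d) (ptraj : ℝ → Vec d) : Prop :=
  ∀ t : ℝ, HasDerivAt ptraj (-(gradP X y Emb v (ptraj t))) t

/-!
The feasible set of the max-margin problem is a polyhedron: closed and convex. It is nonempty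
because a large multiple of `p₀` separates the tokens selected by `p₀` from the others with
margin `1`. The Hilbert projection theorem then gives a unique point of minimal norm.
-/

theorem Convex.eq_of_isMinOn_norm {E : Type*} [NormedAddCommGroup E] [NormedSpace ℝ E]
    [StrictConvexSpace ℝ E] {K : Set E} (hK : Convex ℝ K) {v w : E} (hv : v ∈ K) (hw : w ∈ K)
    (hvmin : IsMinOn (‖·‖) K v) (hwmin : IsMinOn (‖·‖) K w) : v = w := by
  have hnorm : ‖v‖ = ‖w‖ := le_antisymm (hvmin hw) (hwmin hv)
  by_contra hne
  have hmid : (1 / 2 : ℝ) • (v + w) ∈ K := by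
    simpa only [smul_add] using hK hv hw (by norm_num) (by norm_num) (by norm_num)
  exact (hvmin hmid).not_gt ((norm_midpoint_lt_iff hnorm).2 hne)

theorem Convex.existsUnique_isMinOn_norm {F : Type*} [NormedAddCommGroup F]
    [InnerProductSpace ℝ F] {K : Set F} (hK : Convex ℝ K) (hne : K.Nonempty)
    (hcomplete : IsComplete K) : ∃! v, v ∈ K ∧ IsMinOn (‖·‖) K v := by
  obtain ⟨v, hv, hinf⟩ := exists_norm_eq_iInf_of_complete_convex hne hcomplete hK 0
  have hvmin : IsMinOn (‖·‖) K v := fun w hw => by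
    simpa using hinf.trans_le
      (ciInf_le ⟨0, Set.forall_mem_range.2 fun _ => norm_nonneg _⟩ (⟨w, hw⟩ : K))
  exact ⟨v, ⟨hv, hvmin⟩, fun w ⟨hw, hwmin⟩ => hK.eq_of_isMinOn_norm hw hv hwmin hvmin⟩

theorem exists_nonneg_forall_one_le_mul {ι : Type*} [Finite ι] (g : ι → ℝ) :
    ∃ c, 0 ≤ c ∧ ∀ i, 0 < g i → 1 ≤ c * g i := by
  obtain ⟨b, hb⟩ := Finite.bddAbove_range fun i => (g i)⁻¹
  refine ⟨max b 0, le_max_right _ _, fun i hi => ?_⟩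
  calc (1 : ℝ) = (g i)⁻¹ * g i := (inv_mul_cancel₀ hi.ne').symm
    _ ≤ max b 0 * g i := by gcongr; exact (hb ⟨i, rfl⟩).trans (le_max_left _ _)

lemma iprod_smul_left {d : ℕ} (c : ℝ) (p v : Vec d) : iprod (c • p) v = c * iprod p v :=
  real_inner_smul_left p v c

lemma iprod_sub_right {d : ℕ} (p a b : Vec d) : iprod p (a - b) = iprod p a - iprod p b :=
  inner_sub_right p a b

section MaxMargin

variable {d T n : ℕ} (Emb : S → Vec d)

lemma selSet_nonempty [Nonempty (Fin T)] (p : Vec d) (X : Fin T → S) :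
    (selSet Emb p X).Nonempty := by
  obtain ⟨i, hi⟩ := Finite.exists_max fun i => iprod p (Emb (X i))
  exact ⟨X i, ⟨i, rfl⟩, hi⟩

lemma iprod_lt_of_mem_selSet_of_notMem {p : Vec d} {X : Fin T → S} {s s' : S}
    (hs : s ∈ selSet Emb p X) (hs' : s' ∈ Set.range X) (hns' : s' ∉ selSet Emb p X) :
    iprod p (Emb s') < iprod p (Emb s) := by
  obtain ⟨i, hi⟩ : ∃ i, iprod p (Emb s') < iprod p (Emb (X i)) := by
    by_contra! h
    exact hns' ⟨hs', h⟩
  exact hi.trans_le (hs.2 i)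

/-- The feasible set of the max-margin problem as a polyhedron: a token selected by `p₀` must
stay maximal against the other selected tokens (margin `0`) and beat the others by margin `1`. -/
def marginPolyhedron (X : Fin n → Fin T → S) (p₀ : Vec d) : Set (Vec d) :=
  {p | ∀ k, ∀ s ∈ selSet Emb p₀ (X k), ∀ i,
    (if X k i ∈ selSet Emb p₀ (X k) then 0 else 1) ≤ iprod p (Emb s - Emb (X k i))}

variable (X : Fin n → Fin T → S) (p₀ : Vec d)

lemma mmFeasible_iff_mem_marginPolyhedron (p : Vec d) :
    MMFeasible Emb X p₀ p ↔ p ∈ marginPolyhedron Emb X p₀ := by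
  constructor
  · rintro ⟨hsel, hmargin⟩ k s hs i
    split_ifs with hi
    · rw [iprod_sub_right, sub_nonneg]
      exact ((hsel k).symm ▸ hs).2 i
    · exact hmargin k s hs _ ⟨i, rfl⟩ hi
  · intro hp
    have hmargin : ∀ k, ∀ s ∈ selSet Emb p₀ (X k), ∀ s' ∈ Set.range (X k),
        s' ∉ selSet Emb p₀ (X k) → 1 ≤ iprod p (Emb s - Emb s') := by
      rintro k s hs _ ⟨i, rfl⟩ hi
      simpa [hi] using hp k s hs i
    refine ⟨fun k => Set.Subset.antisymm (fun s hs => ?_) fun s hs => ⟨hs.1, fun i => ?_⟩,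
      hmargin⟩
    · by_contra hs₀
      obtain ⟨i, -⟩ := hs.1
      have : Nonempty (Fin T) := ⟨i⟩
      obtain ⟨t, ht⟩ := selSet_nonempty Emb p₀ (X k)
      have h1 := hmargin k t ht s hs.1 hs₀
      obtain ⟨j, rfl⟩ := ht.1
      rw [iprod_sub_right] at h1
      linarith [hs.2 j]
    · have h := hp k s hs i
      rw [iprod_sub_right] at h
      split_ifs at h <;> linarith

lemma isClosed_marginPolyhedron : IsClosed (marginPolyhedron Emb X p₀) := by
  simp only [marginPolyhedron, Set.ofPred_forall]
  exact isClosed_iInter fun k => isClosed_iInter fun s => isClosed_iInter fun _ =>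
    isClosed_iInter fun i => isClosed_le continuous_const (continuous_id.inner continuous_const)

lemma convex_marginPolyhedron : Convex ℝ (marginPolyhedron Emb X p₀) := by
  simp only [marginPolyhedron, Set.ofPred_forall]
  exact convex_iInter fun k => convex_iInter fun s => convex_iInter fun _ =>
    convex_iInter fun i => convex_halfSpace_ge (f := fun p => iprod p _)
      ⟨fun p q => inner_add_left p q _, fun c p => real_inner_smul_left p _ c⟩ _

lemma marginPolyhedron_nonempty : (marginPolyhedron Emb X p₀).Nonempty := by
  obtain ⟨c, hc, hcg⟩ := exists_nonneg_forall_one_le_mul fun t : Fin n × Fin T × Fin T =>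
    iprod p₀ (Emb (X t.1 t.2.1) - Emb (X t.1 t.2.2))
  refine ⟨c • p₀, fun k s hs i => ?_⟩
  obtain ⟨j, rfl⟩ := hs.1
  rw [iprod_smul_left]
  split_ifs with hi
  · rw [iprod_sub_right]
    exact mul_nonneg hc (sub_nonneg.2 (hs.2 i))
  · refine hcg (k, j, i) ?_
    rw [iprod_sub_right, sub_pos]
    exact iprod_lt_of_mem_selSet_of_notMem Emb hs ⟨i, rfl⟩ hi

lemma maxMarginSol_iff (phat : Vec d) :
    MaxMarginSol Emb X p₀ phat ↔
      phat ∈ marginPolyhedron Emb X p₀ ∧ IsMinOn (‖·‖) (marginPolyhedron Emb X p₀) phat := by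
  simp only [MaxMarginSol, mmFeasible_iff_mem_marginPolyhedron, IsMinOn, IsMinFilter,
    Filter.eventually_principal]

end MaxMargin

theorem statement1_general {S : Type*} (d T n : ℕ)
    (X : Fin n → Fin T → S) (Emb : S → Vec d)
    (p₀ : Vec d) :
    ∃! phat : Vec d, MaxMarginSol Emb X p₀ phat := by
  simp only [maxMarginSol_iff]
  exact (convex_marginPolyhedron Emb X p₀).existsUnique_isMinOn_norm
    (marginPolyhedron_nonempty Emb X p₀) (isClosed_marginPolyhedron Emb X p₀).isComplete

/-- for any `p₀ ≠ 0`, the max-margin problem associated with `p₀` is feasible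
and has a unique solution. -/
theorem statement1 {S : Type*} (d T n : ℕ) (hd0 : 0 < d) (hT : 0 < T) (hn : 0 < n)
    (X : Fin n → Fin T → S) (Emb : S → Vec d)
    (p₀ : Vec d) (hp₀ : p₀ ≠ 0) :
    ∃! phat : Vec d, MaxMarginSol Emb X p₀ phat :=
  statement1_general d T n X Emb p₀
end
end

section
/- For any vector p̂ ∈ ℝ^d, the directional derivative of the empirical logistic loss satisfies − p̂·∇_p L(E, p) = (1/n) Σ_{(X,y) ∈ D} g(X, y) Σ_{i=1}^T Σ_{j > i} (â_i(X) − â_j(X)) q_i(X) q_j(X) (γ_i(X, y) − γ_j(X, y)), where â_i(X) = p̂·E_{x_i}. -/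
open MeasureTheory ProbabilityTheory Filter Topology
open scoped BigOperators ENNReal NNReal Classical

noncomputable section

variable {S : Type*}

/-!
Along the line `t ↦ p + t • p̂` the attention scores become `a_i + t â_i`, so the derivative of
`f = Σ q_i c_i` (with `c_i = E_{x_i}·v`) is the `q`-weighted covariance of `â` and `c`. With
`w_i = exp a_i`, the numerator of that covariance is
`(Σ â w c)(Σ w) - (Σ w c)(Σ â w) = Σ_{i<j} (â_i - â_j) w_i w_j (c_i - c_j)`, and the chain rule
through `log (1 + exp (-y f))` contributes the factor `-y g`.
-/

open Finset Real

section PairSums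

variable {ι : Type*} [Fintype ι] [LinearOrder ι]

theorem sum_sum_eq_sum_sum_lt_add_swap {M : Type*} [AddCommMonoid M] (G : ι → ι → M)
    (hG : ∀ i, G i i = 0) :
    ∑ i, ∑ j, G i j = ∑ i, ∑ j ∈ univ.filter (i < ·), (G i j + G j i) := by
  have hsplit : ∀ i, ∑ j, G i j
      = ∑ j ∈ univ.filter (i < ·), G i j + ∑ j ∈ univ.filter (· < i), G i j := by
    intro i
    rw [← sum_filter_add_sum_filter_not univ (i < ·),
      ← add_sum_erase (univ.filter (¬ i < ·)) (G i) (a := i) (by simp), hG, zero_add]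
    congr 2
    ext j
    simp only [mem_erase, mem_filter, mem_univ, true_and, not_lt]
    grind
  simp only [hsplit, sum_add_distrib]
  congr 1
  exact sum_comm' (by simp)

theorem sum_mul_sum_sub_sum_mul_sum_eq_sum_lt {R : Type*} [CommRing R] (w a c : ι → R) :
    (∑ i, a i * w i * c i) * ∑ i, w i - (∑ i, w i * c i) * ∑ i, a i * w i
      = ∑ i, ∑ j ∈ univ.filter (i < ·), (a i - a j) * w i * w j * (c i - c j) := by
  simp only [sum_mul_sum, ← sum_sub_distrib]
  rw [sum_sum_eq_sum_sum_lt_add_swap _ fun i => by ring]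
  exact sum_congr rfl fun i _ => sum_congr rfl fun j _ => by ring

end PairSums

section Softmax

variable {ι : Type*} [Fintype ι]

def softmax (a : ι → ℝ) (i : ι) : ℝ := exp (a i) / ∑ j, exp (a j)

theorem hasDerivAt_softmax_average [LinearOrder ι] [Nonempty ι] (a b c : ι → ℝ) :
    HasDerivAt (fun t => (∑ i, exp (a i + t * b i) * c i) / ∑ i, exp (a i + t * b i))
      (∑ i, ∑ j ∈ univ.filter (i < ·), (b i - b j) * softmax a i * softmax a j * (c i - c j))
      0 := by
  have hexp : ∀ i, HasDerivAt (fun t => exp (a i + t * b i)) (exp (a i) * b i) 0 := fun i => by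
    simpa using (((hasDerivAt_id (0 : ℝ)).mul_const (b i)).const_add (a i)).exp
  have hZ : (∑ i, exp (a i)) ≠ 0 := by positivity
  refine ((HasDerivAt.fun_sum fun i _ => (hexp i).mul_const (c i)).div
    (HasDerivAt.fun_sum fun i _ => hexp i) (by simpa using hZ)).congr_deriv ?_
  simp only [zero_mul, add_zero]
  symm
  calc _ = (∑ i, ∑ j ∈ univ.filter (i < ·),
        (b i - b j) * exp (a i) * exp (a j) * (c i - c j)) / (∑ i, exp (a i)) ^ 2 := by
        unfold softmax
        simp only [sum_div]
        exact sum_congr rfl fun i _ => sum_congr rfl fun j _ => by ring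
    _ = _ := by
        rw [← sum_mul_sum_sub_sum_mul_sum_eq_sum_lt]
        simp only [mul_comm (b _)]

end Softmax

theorem hasDerivAt_log_one_add_exp_neg_mul {F : ℝ → ℝ} {F' x : ℝ} (y : ℝ)
    (hF : HasDerivAt F F' x) :
    HasDerivAt (fun t => log (1 + exp (-y * F t))) (-(y * F' / (1 + exp (y * F x)))) x := by
  convert ((hF.const_mul (-y)).exp.const_add 1).log (by positivity) using 1
  rw [neg_mul, exp_neg]
  field_simp
  ring

theorem inner_gradient_eq_of_hasDerivAt_line {E : Type*} [NormedAddCommGroup E]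
    [InnerProductSpace ℝ E] [CompleteSpace E] {f : E → ℝ} {p h : E} {D : ℝ}
    (hf : DifferentiableAt ℝ f p) (hD : HasDerivAt (fun t : ℝ => f (p + t • h)) D 0) :
    inner ℝ h (gradient f p) = D := by
  have hline : HasDerivAt (fun t : ℝ => p + t • h) h 0 := by
    simpa using ((hasDerivAt_id (0 : ℝ)).smul_const h).const_add p
  rw [real_inner_comm, gradient, InnerProductSpace.toDual_symm_apply]
  have hf' : HasFDerivAt f (fderiv ℝ f p) (p + (0 : ℝ) • h) := by simpa using hf.hasFDerivAt
  exact (hf'.comp_hasDerivAt 0 hline).unique hD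

section AttentionModel

variable {d T : ℕ}

theorem differentiableAt_lossL [Nonempty (Fin T)] {n : ℕ} (X : Fin n → Fin T → S)
    (y : Fin n → ℝ) (Emb : S → Vec d) (v p : Vec d) :
    DifferentiableAt ℝ (lossL X y Emb v) p := by
  have hinner : ∀ e : Vec d, Differentiable ℝ (fun u : Vec d => inner ℝ u e) :=
    fun e => differentiable_id.inner ℝ (differentiable_const e)
  unfold lossL fAttn iprod
  fun_prop (disch := positivity)

theorem hasDerivAt_fAttn_line [Nonempty (Fin T)] (Emb : S → Vec d) (v p h : Vec d)
    (X : Fin T → S) :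
    HasDerivAt (fun t : ℝ => fAttn Emb v (p + t • h) X)
      (∑ i, ∑ j ∈ univ.filter (i < ·), (iprod h (Emb (X i)) - iprod h (Emb (X j))) *
        qw Emb p X i * qw Emb p X j * (iprod (Emb (X i)) v - iprod (Emb (X j)) v)) 0 := by
  have hline : (fun t : ℝ => fAttn Emb v (p + t • h) X) = fun t =>
      (∑ i, exp (iprod p (Emb (X i)) + t * iprod h (Emb (X i))) * iprod (Emb (X i)) v) /
        ∑ i, exp (iprod p (Emb (X i)) + t * iprod h (Emb (X i))) := by
    funext t
    simp only [fAttn, iprod, inner_add_left, real_inner_smul_left]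
  rw [hline]
  exact hasDerivAt_softmax_average _ _ _

end AttentionModel

theorem statement6_general {S : Type*} (d T n : ℕ) (hT : 0 < T)
    (X : Fin n → Fin T → S) (y : Fin n → ℝ)
    (Emb : S → Vec d) (v p : Vec d) (phat : Vec d) :
    -(iprod (phat) (gradP X y Emb v p)) =
      (1 / n : ℝ) * ∑ k, gfun Emb v p (X k) (y k) *
        ∑ i, ∑ j ∈ Finset.univ.filter (fun j => i < j),
          ((iprod (phat) (Emb (X k i))) - (iprod (phat) (Emb (X k j)))) *
            qw Emb p (X k) i * qw Emb p (X k) j *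
            (y k * (iprod (Emb (X k i)) (v)) - y k * (iprod (Emb (X k j)) (v))) := by
  have : Nonempty (Fin T) := ⟨⟨0, hT⟩⟩
  have hloss := (HasDerivAt.fun_sum (u := univ) fun k _ =>
    hasDerivAt_log_one_add_exp_neg_mul (y k) (hasDerivAt_fAttn_line Emb v p phat (X k))).const_mul
      (1 / n : ℝ)
  rw [iprod, gradP, inner_gradient_eq_of_hasDerivAt_line (differentiableAt_lossL X y Emb v p) hloss]
  simp only [zero_smul, add_zero, sum_neg_distrib, mul_neg, neg_neg, gfun]
  congr 1
  refine sum_congr rfl fun k _ => ?_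
  rw [one_div_mul_eq_div, mul_sum]
  congr 1
  refine sum_congr rfl fun i _ => ?_
  rw [mul_sum]
  exact sum_congr rfl fun j _ => by ring

/-- the directional derivative of the loss along any `phat` satisfies
`-phat·∇_p L = (1/n) Σ_{(X,y)} g(X,y) Σ_i Σ_{j>i} (â_i - â_j) q_i q_j (γ_i - γ_j)`. -/
theorem statement6 {S : Type*} (d T n : ℕ) (hd0 : 0 < d) (hT : 0 < T) (hn : 0 < n)
    (X : Fin n → Fin T → S) (y : Fin n → ℝ) (hy : ∀ k, y k = 1 ∨ y k = -1)
    (Emb : S → Vec d) (v p : Vec d) (hv : ‖v‖ = 1) (phat : Vec d) :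
    -(iprod (phat) (gradP X y Emb v p)) =
      (1 / n : ℝ) * ∑ k, gfun Emb v p (X k) (y k) *
        ∑ i, ∑ j ∈ Finset.univ.filter (fun j => i < j),
          ((iprod (phat) (Emb (X k i))) - (iprod (phat) (Emb (X k j)))) *
            qw Emb p (X k) i * qw Emb p (X k) j *
            (y k * (iprod (Emb (X k i)) (v)) - y k * (iprod (Emb (X k j)) (v))) :=
  statement6_general d T n hT X y Emb v p phat
end
end

section
/- Let p_t be a gradient-flow trajectory for L(E, ·) with ||p_t||_2 → ∞, and suppose there exists a nonzero vector p̂ such that for every ε > 0 there is a time t̄(ε) with − (p̂/||p̂||_2)·∇_p L(E, p_t) ≥ −(1 − ε) (p_t/||p_t||_2)·∇_p L(E, p_t) for all t ≥ t̄(ε). Then, if lim_{t → ∞} p_t / ||p_t||_2 exists, it equals p̂ / ||p̂||_2. -/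
open MeasureTheory ProbabilityTheory Filter Topology
open scoped BigOperators ENNReal NNReal Classical

noncomputable section

variable {S : Type*}

/-! Along the trajectory, `t ↦ ⟪u, p t⟫ - (1 - ε) ‖p t‖` is eventually nondecreasing, since its
derivative is exactly the difference of the two sides of the dominance hypothesis. Hence
`⟪u, p t⟫ ≥ (1 - ε) ‖p t‖ - C`; dividing by `‖p t‖ → ∞` gives `⟪u, q⟫ ≥ 1 - ε` for the limit
direction `q`. Letting `ε → 0`, the unit vectors `u = phat / ‖phat‖` and `q` satisfy `⟪u, q⟫ ≥ 1`,
which forces `q = u`. -/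

open scoped InnerProductSpace

section GeneralInnerProductSpace

variable {E : Type*} [NormedAddCommGroup E] [InnerProductSpace ℝ E]

theorem HasDerivAt.norm {f : ℝ → E} {f' : E} {t : ℝ} (hf : HasDerivAt f f' t)
    (h0 : f t ≠ 0) : HasDerivAt (‖f ·‖) ⟪‖f t‖⁻¹ • f t, f'⟫_ℝ t := by
  have hsq : ∀ s, √(‖f s‖ ^ 2) = ‖f s‖ := fun s => Real.sqrt_sq (norm_nonneg _)
  have h := hf.norm_sq.sqrt (pow_ne_zero 2 (norm_ne_zero_iff.mpr h0))
  simp only [hsq] at h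
  convert h using 1
  rw [real_inner_smul_left]
  field_simp

theorem monotoneOn_inner_sub_mul_norm {p p' : ℝ → E} {u : E} {c t₀ : ℝ}
    (hderiv : ∀ t ≥ t₀, HasDerivAt p (p' t) t) (hne : ∀ t ≥ t₀, p t ≠ 0)
    (hdom : ∀ t ≥ t₀, c * ⟪‖p t‖⁻¹ • p t, p' t⟫_ℝ ≤ ⟪u, p' t⟫_ℝ) :
    MonotoneOn (fun t => ⟪u, p t⟫_ℝ - c * ‖p t‖) (Set.Ici t₀) := by
  have hφ : ∀ t ≥ t₀, HasDerivAt (fun t => ⟪u, p t⟫_ℝ - c * ‖p t‖)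
      (⟪u, p' t⟫_ℝ - c * ⟪‖p t‖⁻¹ • p t, p' t⟫_ℝ) t := by
    intro t ht
    have hinner : HasDerivAt (fun s => ⟪u, p s⟫_ℝ) ⟪u, p' t⟫_ℝ t := by
      simpa using (hasDerivAt_const t u).inner ℝ (hderiv t ht)
    exact hinner.sub (((hderiv t ht).norm (hne t ht)).const_mul c)
  refine monotoneOn_of_hasDerivWithinAt_nonneg (convex_Ici t₀)
    (fun t ht => (hφ t ht).continuousAt.continuousWithinAt)
    (fun t ht => (hφ t (interior_subset ht)).hasDerivWithinAt) fun t ht => ?_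
  exact sub_nonneg.mpr (hdom t (interior_subset ht))

theorem le_inner_of_tendsto_normalize {p : ℝ → E} {u q : E} {c C : ℝ}
    (hnorm : Tendsto (‖p ·‖) atTop atTop)
    (hq : Tendsto (fun t => ‖p t‖⁻¹ • p t) atTop (𝓝 q))
    (hbound : ∀ᶠ t in atTop, c * ‖p t‖ + C ≤ ⟪u, p t⟫_ℝ) :
    c ≤ ⟪u, q⟫_ℝ := by
  have hlower : Tendsto (fun t => c + C * ‖p t‖⁻¹) atTop (𝓝 c) := by
    simpa using tendsto_const_nhds.add (tendsto_const_nhds.mul hnorm.inv_tendsto_atTop)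
  refine le_of_tendsto_of_tendsto hlower (tendsto_const_nhds.inner hq) ?_
  filter_upwards [hbound, hnorm.eventually_gt_atTop 0] with t ht hpos
  rw [real_inner_smul_right]
  calc c + C * ‖p t‖⁻¹ = (c * ‖p t‖ + C) / ‖p t‖ := by field_simp
    _ ≤ ‖p t‖⁻¹ * ⟪u, p t⟫_ℝ := by
      rw [inv_mul_eq_div]; exact div_le_div_of_nonneg_right ht hpos.le

theorem norm_eq_one_of_tendsto_normalize {p : ℝ → E} {q : E}
    (hnorm : Tendsto (‖p ·‖) atTop atTop)
    (hq : Tendsto (fun t => ‖p t‖⁻¹ • p t) atTop (𝓝 q)) : ‖q‖ = 1 := by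
  refine tendsto_nhds_unique hq.norm (tendsto_const_nhds.congr' ?_)
  filter_upwards [hnorm.eventually_gt_atTop 0] with t ht
  exact (norm_smul_inv_norm (norm_pos_iff.mp ht)).symm

theorem le_inner_of_tendsto_normalize_of_dominates {p p' : ℝ → E} {u q : E} {c : ℝ}
    (hderiv : ∀ᶠ t in atTop, HasDerivAt p (p' t) t)
    (hdom : ∀ᶠ t in atTop, c * ⟪‖p t‖⁻¹ • p t, p' t⟫_ℝ ≤ ⟪u, p' t⟫_ℝ)
    (hnorm : Tendsto (‖p ·‖) atTop atTop)
    (hq : Tendsto (fun t => ‖p t‖⁻¹ • p t) atTop (𝓝 q)) :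
    c ≤ ⟪u, q⟫_ℝ := by
  obtain ⟨t₀, ht₀⟩ := eventually_atTop.mp
    (hderiv.and (hdom.and (hnorm.eventually_gt_atTop 0)))
  have hmono := monotoneOn_inner_sub_mul_norm (fun t ht => (ht₀ t ht).1)
    (fun t ht => norm_pos_iff.mp (ht₀ t ht).2.2) (fun t ht => (ht₀ t ht).2.1)
  refine le_inner_of_tendsto_normalize (C := ⟪u, p t₀⟫_ℝ - c * ‖p t₀‖) hnorm hq ?_
  filter_upwards [eventually_ge_atTop t₀] with t ht
  have hstart := hmono Set.self_mem_Ici (Set.mem_Ici.mpr ht) ht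
  simp only at hstart
  linarith

theorem eq_of_norm_eq_one_of_forall_sub_le_inner {u q : E} (hu : ‖u‖ = 1) (hq : ‖q‖ = 1)
    (h : ∀ ε > 0, 1 - ε ≤ ⟪u, q⟫_ℝ) : q = u := by
  have hle : ⟪u, q⟫_ℝ ≤ 1 := by simpa [hu, hq] using real_inner_le_norm u q
  exact ((inner_eq_one_iff_of_norm_eq_one hu hq).mp (hle.antisymm (le_of_forall_sub_le h))).symm

end GeneralInnerProductSpace

theorem statement7_general {S : Type*} (d T n : ℕ)
    (X : Fin n → Fin T → S) (y : Fin n → ℝ)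
    (Emb : S → Vec d) (v : Vec d)
    (ptraj : ℝ → Vec d) (hflow : GradFlow X y Emb v ptraj)
    (hnorm : Tendsto (fun t => ‖ptraj t‖) atTop atTop)
    (phat : Vec d) (hphat : phat ≠ 0)
    (hdir : ∀ ε : ℝ, 0 < ε → ∃ tbar : ℝ, ∀ t ≥ tbar,
      -(1 - ε) * (iprod ((‖ptraj t‖⁻¹ • ptraj t : Vec d)) (gradP X y Emb v (ptraj t))) ≤
        -(iprod ((‖phat‖⁻¹ • phat : Vec d)) (gradP X y Emb v (ptraj t))))
    (q : Vec d)
    (hq : Tendsto (fun t => (‖ptraj t‖⁻¹ • ptraj t : Vec d)) atTop (𝓝 q)) :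
    q = ‖phat‖⁻¹ • phat := by
  refine eq_of_norm_eq_one_of_forall_sub_le_inner (norm_smul_inv_norm hphat)
    (norm_eq_one_of_tendsto_normalize hnorm hq) fun ε hε => ?_
  obtain ⟨tbar, htbar⟩ := hdir ε hε
  refine le_inner_of_tendsto_normalize_of_dominates (.of_forall hflow) ?_ hnorm hq
  filter_upwards [eventually_ge_atTop tbar] with t ht
  have h := htbar t ht
  rw [iprod, iprod] at h
  rw [inner_neg_right, inner_neg_right]
  linarith

/-- convergence lemma: if `‖p_t‖ → ∞` and the direction `phat` asymptotically
dominates the directional derivative along the trajectory, then the directional limit of the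
gradient flow, if it exists, equals `phat / ‖phat‖`. -/
theorem statement7 {S : Type*} (d T n : ℕ) (hd0 : 0 < d) (hT : 0 < T) (hn : 0 < n)
    (X : Fin n → Fin T → S) (y : Fin n → ℝ) (hy : ∀ k, y k = 1 ∨ y k = -1)
    (Emb : S → Vec d) (v : Vec d) (hv : ‖v‖ = 1)
    (ptraj : ℝ → Vec d) (hflow : GradFlow X y Emb v ptraj)
    (hnorm : Tendsto (fun t => ‖ptraj t‖) atTop atTop)
    (phat : Vec d) (hphat : phat ≠ 0)
    (hdir : ∀ ε : ℝ, 0 < ε → ∃ tbar : ℝ, ∀ t ≥ tbar,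
      -(1 - ε) * (iprod ((‖ptraj t‖⁻¹ • ptraj t : Vec d)) (gradP X y Emb v (ptraj t))) ≤
        -(iprod ((‖phat‖⁻¹ • phat : Vec d)) (gradP X y Emb v (ptraj t))))
    (q : Vec d)
    (hq : Tendsto (fun t => (‖ptraj t‖⁻¹ • ptraj t : Vec d)) atTop (𝓝 q)) :
    q = ‖phat‖⁻¹ • phat :=
  statement7_general d T n X y Emb v ptraj hflow hnorm phat hphat hdir q hq
end
end
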